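/- Consider the gadget construction: given a bipartite graph G = (R ∪ D, E) where E is partitioned into half-compatible edges E_H and other edges E_O, form G' by adding vertex sets A = {a_1,...,a_h} and B = {b_1,...,b_h}, adding the h disjoint edges (a_k, b_k), deleting all edges of E_H, and adding edges (r, a_k) for every r that was an endpoint of some half-compatible edge and every k, and edges (b_k, d) for every d that was an endpoint of some half-compatible edge and every k. Suppose moreover that in G every vertex of R is adjacent (via E_H or E_O) to every vertex of D (the Silver Bullet assumption restricted to these sides). Then G' has a perfect matching if and only if G has a perfect matching M with |M ∩ E_H| ≤ h. -/

import Mathlib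

/-- A matching in a bipartite graph with parts `A`, `B`: a set of pairs
no two of which share an endpoint. -/
def IsMatching {A B : Type*} (M : Finset (A × B)) : Prop :=
  ∀ e ∈ M, ∀ f ∈ M, e ≠ f → e.1 ≠ f.1 ∧ e.2 ≠ f.2

/-- A perfect matching: a matching covering every vertex on both sides. -/
def IsPerfect {A B : Type*} (M : Finset (A × B)) : Prop :=
  IsMatching M ∧ (∀ a : A, ∃ b, (a, b) ∈ M) ∧ (∀ b : B, ∃ a, (a, b) ∈ M)

/-!
Perfect matchings are exactly the graphs of bijections. A bijection `e' : R ⊕ K ≃ D ⊕ K` along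
the edges of `G'` (with `K = Fin h`, `inr k` standing for `b_k` on the left and `a_k` on the
right) sends at most `|K|` vertices of `R` into `K` and all the others along edges of `E_O`.
As `|R| = |D|`, this partial bijection `R → D` extends to a bijection `R ≃ D`; by the Silver
Bullet assumption it runs along edges of `G`, and only its at most `|K|` new edges can lie in `E_H`.
Conversely, given `e : R ≃ D` whose set `F` of half-compatible edges has `|F| ≤ |K|`, choose a
bijection `φ` from `F` onto some `J ⊆ K`, match `r ∈ F` with `a_{φ r}`, `b_{φ r}` with `e r`,
`b_k` with `a_k` for `k ∉ J`, and keep the remaining edges of `e`.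
-/

open Finset Function Sum

section Matching

variable {A B : Type*} {M : Finset (A × B)}

lemma IsMatching.eq_of_fst_eq (hM : IsMatching M) {e f : A × B} (he : e ∈ M) (hf : f ∈ M)
    (h : e.1 = f.1) : e = f :=
  of_not_not fun hne => (hM e he f hf hne).1 h

lemma IsMatching.eq_of_snd_eq (hM : IsMatching M) {e f : A × B} (he : e ∈ M) (hf : f ∈ M)
    (h : e.2 = f.2) : e = f :=
  of_not_not fun hne => (hM e he f hf hne).2 h

variable [Fintype A] [Fintype B] [DecidableEq B]

def graphFinset (e : A ≃ B) : Finset (A × B) := {p | e p.1 = p.2}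

@[simp]
lemma mem_graphFinset {e : A ≃ B} {p : A × B} : p ∈ graphFinset e ↔ e p.1 = p.2 := by
  simp [graphFinset]

lemma graphFinset_subset_iff {e : A ≃ B} {E : Finset (A × B)} :
    graphFinset e ⊆ E ↔ ∀ a, (a, e a) ∈ E := by
  simp [subset_iff]

lemma card_graphFinset_inter [DecidableEq A] (e : A ≃ B) (H : Finset (A × B)) :
    #(graphFinset e ∩ H) = #{a | (a, e a) ∈ H} :=
  card_nbij' Prod.fst (fun a => (a, e a)) (fun p hp => by aesop) (fun a ha => by aesop)
    (fun p hp => by aesop) (fun a _ => rfl)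

lemma isPerfect_graphFinset (e : A ≃ B) : IsPerfect (graphFinset e) := by
  refine ⟨fun p hp q hq hne => ⟨fun h => hne ?_, fun h => hne ?_⟩,
    fun a => ⟨e a, by simp⟩, fun b => ⟨e.symm b, by simp⟩⟩
  · rw [mem_graphFinset] at hp hq
    exact Prod.ext h (by rw [← hp, ← hq, h])
  · rw [mem_graphFinset] at hp hq
    exact Prod.ext (e.injective (by rw [hp, hq, h])) h

lemma IsPerfect.exists_graphFinset_eq (hM : IsPerfect M) : ∃ e : A ≃ B, graphFinset e = M := by
  obtain ⟨hM, hA, hB⟩ := hM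
  choose f hf using hA
  choose g hg using hB
  let e : A ≃ B :=
    { toFun := f
      invFun := g
      left_inv := fun a => congrArg Prod.fst (hM.eq_of_snd_eq (hg (f a)) (hf a) rfl)
      right_inv := fun b => congrArg Prod.snd (hM.eq_of_fst_eq (hf (g b)) (hg b) rfl) }
  refine ⟨e, ext fun ⟨a, b⟩ => ⟨fun h => ?_, fun h => ?_⟩⟩
  · obtain rfl : f a = b := mem_graphFinset.1 h
    exact hf a
  · exact mem_graphFinset.2 (congrArg Prod.snd (hM.eq_of_fst_eq (hf a) h rfl))

end Matching

section SumEquiv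

variable {α β γ : Type*}

lemma card_filter_isRight_le [Fintype α] [Fintype γ] {f : α → β ⊕ γ} (hf : Injective f) :
    #{a | (f a).isRight} ≤ Fintype.card γ :=
  calc #{a | (f a).isRight} ≤ #(univ.map .inr : Finset (β ⊕ γ)) :=
        card_le_card_of_injOn f (fun a ha => by
          obtain ⟨c, hc⟩ := isRight_iff.1 (mem_filter.1 ha).2
          simp [hc]) hf.injOn
    _ = Fintype.card γ := by simp

variable {p : α → Prop} {q : β → Prop} [DecidablePred p] [DecidablePred q]

def sumSwapAlong (φ : {a // p a} ≃ {b // q b}) : Equiv.Perm (α ⊕ β) :=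
  Involutive.toPerm
    (Sum.elim (fun a => if h : p a then inr (φ ⟨a, h⟩ : β) else inl a)
      (fun b => if h : q b then inl (φ.symm ⟨b, h⟩ : α) else inr b))
    (by
      rintro (a | b)
      · by_cases h : p a
        · simp [h, (φ ⟨a, h⟩).2]
        · simp [h]
      · by_cases h : q b
        · simp [h, (φ.symm ⟨b, h⟩).2]
        · simp [h])

@[simp]
lemma sumSwapAlong_inl (φ : {a // p a} ≃ {b // q b}) (a : α) :
    sumSwapAlong φ (inl a) = if h : p a then inr (φ ⟨a, h⟩ : β) else inl a :=
  rfl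

@[simp]
lemma sumSwapAlong_inr (φ : {a // p a} ≃ {b // q b}) (b : β) :
    sumSwapAlong φ (inr b) = if h : q b then inl (φ.symm ⟨b, h⟩ : α) else inr b :=
  rfl

end SumEquiv

lemma exists_equiv_card_filter_notMem_le {R D K : Type*} [Fintype R] [Fintype D] [Fintype K]
    [DecidableEq R] [DecidableEq D] (hcard : Fintype.card R = Fintype.card D)
    (e' : R ⊕ K ≃ D ⊕ K) (O : Finset (R × D)) (hO : ∀ r d, e' (inl r) = inl d → (r, d) ∈ O) :
    ∃ e : R ≃ D, #{r | (r, e r) ∉ O} ≤ Fintype.card K := by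
  obtain ⟨e₀⟩ : Nonempty (R ≃ D) := Fintype.card_eq.1 hcard
  let f : R → D := fun r => (e' (inl r)).elim id fun _ => e₀ r
  have hf : Set.InjOn f {r | ∃ d, e' (inl r) = inl d} := by
    rintro r₁ ⟨d₁, h₁⟩ r₂ ⟨d₂, h₂⟩ hf
    simp only [f, h₁, h₂, elim_inl, id] at hf
    exact inl_injective (e'.injective (by rw [h₁, h₂, hf]))
  obtain ⟨g, hg⟩ := Set.MapsTo.exists_equiv_extend_of_card_eq (t := univ)
    (by simpa using hcard) (fun _ _ => mem_coe.2 (mem_univ _)) hf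
  let e := g.trans (Equiv.subtypeUnivEquiv mem_univ)
  have he : ∀ r d, e' (inl r) = inl d → e r = d := fun r d h => by
    simpa [e, f, h] using hg r ⟨d, h⟩
  refine ⟨e, (card_le_card fun r => ?_).trans
    (card_filter_isRight_le (e'.injective.comp inl_injective))⟩
  simp only [mem_filter, mem_univ, true_and, comp_apply]
  rcases h : e' (inl r) with d | k
  · exact fun hr => absurd (he r d h ▸ hO r d h) hr
  · simp

lemma exists_sumEquiv_reroute_of_card_le {R D K : Type*} [Fintype K] (e : R ≃ D) (F : Finset R)
    (hF : #F ≤ Fintype.card K) :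
    ∃ e' : R ⊕ K ≃ D ⊕ K, (∀ r ∉ F, e' (inl r) = inl (e r)) ∧ (∀ r ∈ F, ∃ k, e' (inl r) = inr k) ∧
      ∀ k, e' (inr k) = inr k ∨ ∃ r ∈ F, e' (inr k) = inl (e r) := by
  classical
  obtain ⟨J, -, hJ⟩ := exists_subset_card_eq (s := (univ : Finset K)) (by simpa using hF)
  let φ : F ≃ J := Fintype.equivOfCardEq (by simp [hJ])
  refine ⟨(sumSwapAlong φ).trans (Equiv.sumCongr e (Equiv.refl K)), fun r hr => ?_,
    fun r hr => ⟨φ ⟨r, hr⟩, ?_⟩, fun k => ?_⟩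
  · simp [hr]
  · simp [hr]
  · by_cases hk : k ∈ J
    · exact Or.inr ⟨φ.symm ⟨k, hk⟩, (φ.symm ⟨k, hk⟩).2, by simp [hk]⟩
    · exact Or.inl (by simp [hk])

/-- the gadget construction. `G'` has bipartition (R ∪ B, D ∪ A) where
B and A are each a copy of `Fin h`; half-compatible edges of G are replaced by edges
to the gadget. Under the Silver Bullet assumption (every r–d pair is joined by an edge),
G' has a perfect matching iff G has a perfect matching M with |M ∩ E_H| ≤ h. -/
theorem stmt8 {R D : Type*} [Fintype R] [Fintype D] [DecidableEq R] [DecidableEq D]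
    (n h : ℕ) (hR : Fintype.card R = n) (hD : Fintype.card D = n)
    (EH EO : Finset (R × D)) (hdisj : Disjoint EH EO)
    (hSB : ∀ r d, (r, d) ∈ EH ∪ EO)
    (E' : Finset ((R ⊕ Fin h) × (D ⊕ Fin h)))
    (hE' : ∀ x, x ∈ E' ↔
      (∃ r d, x = (Sum.inl r, Sum.inl d) ∧ (r, d) ∈ EO) ∨
      (∃ k : Fin h, x = (Sum.inr k, Sum.inr k)) ∨
      (∃ (r : R) (k : Fin h), x = (Sum.inl r, Sum.inr k) ∧ ∃ d, (r, d) ∈ EH) ∨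
      (∃ (k : Fin h) (d : D), x = (Sum.inr k, Sum.inl d) ∧ ∃ r, (r, d) ∈ EH)) :
    (∃ M ⊆ E', IsPerfect M) ↔
    (∃ M ⊆ EH ∪ EO, IsPerfect M ∧ (M ∩ EH).card ≤ h) := by
  constructor
  · rintro ⟨_, hsub, hM'⟩
    obtain ⟨e', rfl⟩ := hM'.exists_graphFinset_eq
    have hEO : ∀ r d, e' (inl r) = inl d → (r, d) ∈ EO := fun r d hrd => by
      simpa [hrd] using (hE' _).1 (graphFinset_subset_iff.1 hsub (inl r))
    obtain ⟨e, he⟩ := exists_equiv_card_filter_notMem_le (hR.trans hD.symm) e' EO hEO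
    refine ⟨graphFinset e, graphFinset_subset_iff.2 fun r => hSB r (e r),
      isPerfect_graphFinset e, ?_⟩
    calc #(graphFinset e ∩ EH) = #{r | (r, e r) ∈ EH} := card_graphFinset_inter e EH
      _ ≤ #{r | (r, e r) ∉ EO} :=
        card_le_card (monotone_filter_right _ fun _ _ h => disjoint_left.1 hdisj h)
      _ ≤ h := he.trans_eq (Fintype.card_fin h)
  · rintro ⟨_, -, hM, hcard⟩
    obtain ⟨e, rfl⟩ := hM.exists_graphFinset_eq
    rw [card_graphFinset_inter] at hcard
    obtain ⟨e', hO, hH, hK⟩ :=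
      exists_sumEquiv_reroute_of_card_le (K := Fin h) e _
        (hcard.trans_eq (Fintype.card_fin h).symm)
    refine ⟨graphFinset e', graphFinset_subset_iff.2 ?_, isPerfect_graphFinset e'⟩
    rintro (r | k)
    · by_cases hr : (r, e r) ∈ EH
      · obtain ⟨k, hk⟩ := hH r (by simpa using hr)
        rw [hE', hk]; exact Or.inr (Or.inr (Or.inl ⟨r, k, rfl, e r, hr⟩))
      · rw [hE', hO r (by simpa using hr)]
        exact Or.inl ⟨r, e r, rfl, (mem_union.1 (hSB r (e r))).resolve_left hr⟩
    · rcases hK k with hk | ⟨r, hr, hk⟩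
      · rw [hE', hk]; exact Or.inr (Or.inl ⟨k, rfl⟩)
      · rw [hE', hk]; exact Or.inr (Or.inr (Or.inr ⟨k, e r, rfl, r, by simpa using hr⟩))
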